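/- arXiv:2212.13847 — 2 statements merged into one kernel-verified Lean document; each statement's English description precedes it below -/
import Mathlib

section
/- (Theorem 1, part 1.) Let E be a real inner product space, let a ∈ E with a ≠ 0 be the anchor embedding, let τ > 0, let n ≥ 1 and let z : Fin n → E be the negative-sample embeddings. For each index t, let F_t : E → ℝ be F_t(v) = log( exp(⟪a, v⟫/τ) + ∑_{j ≠ t} exp(⟪a, z j⟫/τ) ), the InfoNCE log-partition term as a function of the t-th negative embedding with the others fixed. If two indices t₁, t₂ satisfy ⟪a, z t₁⟫ > ⟪a, z t₂⟫, then the gradient of the loss with respect to the first negative sample is strictly larger in norm: ‖gradient F_{t₁} (z t₁)‖ > ‖gradient F_{t₂} (z t₂)‖. -/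
open Real Finset RealInnerProductSpace

/-! The gradient of `v ↦ log (exp (⟪a, v⟫ / τ) + C)` is a scalar multiple of `a`; evaluated at
`z t` with `C` the sum over the other negatives, the scalar is the softmax weight of `z t` divided
by `τ`. Since all these gradients point along the same vector `a ≠ 0`, their norms are ordered like
the weights `exp (⟪a, z t⟫ / τ)`, which increase with the similarity `⟪a, z t⟫` because `τ > 0`. -/

section

variable {E : Type*} [NormedAddCommGroup E] [InnerProductSpace ℝ E] [CompleteSpace E]

theorem HasDerivAt.hasGradientAt_comp_inner {f : ℝ → ℝ} {f' : ℝ} (a x : E)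
    (hf : HasDerivAt f f' ⟪a, x⟫) : HasGradientAt (fun v : E => f ⟪a, v⟫) (f' • a) x := by
  rw [hasGradientAt_iff_hasFDerivAt]
  refine (hf.comp_hasFDerivAt x (innerSL ℝ a).hasFDerivAt).congr_fderiv ?_
  ext v
  simp

theorem hasDerivAt_log_exp_div_add {τ C s : ℝ} (hs : exp (s / τ) + C ≠ 0) :
    HasDerivAt (fun s => log (exp (s / τ) + C)) (exp (s / τ) / (τ * (exp (s / τ) + C))) s := by
  refine ((((hasDerivAt_id s).div_const τ).exp.add_const C).log hs).congr_deriv ?_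
  simp only [id]
  field_simp

theorem gradient_log_exp_inner_add_sum_erase {ι : Type*} [Fintype ι] [DecidableEq ι]
    (a : E) (τ : ℝ) (z : ι → E) (t : ι) :
    gradient (fun v : E => log (exp (⟪a, v⟫ / τ) +
        ∑ j ∈ univ.erase t, exp (⟪a, z j⟫ / τ))) (z t) =
      (exp (⟪a, z t⟫ / τ) / (τ * ∑ j, exp (⟪a, z j⟫ / τ))) • a := by
  have hsum : exp (⟪a, z t⟫ / τ) + ∑ j ∈ univ.erase t, exp (⟪a, z j⟫ / τ) =
      ∑ j, exp (⟪a, z j⟫ / τ) :=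
    add_sum_erase _ (fun j => exp (⟪a, z j⟫ / τ)) (mem_univ t)
  have hpos : 0 < exp (⟪a, z t⟫ / τ) + ∑ j ∈ univ.erase t, exp (⟪a, z j⟫ / τ) := by
    positivity
  rw [((hasDerivAt_log_exp_div_add hpos.ne').hasGradientAt_comp_inner a (z t)).gradient, hsum]

end

theorem infoNCE_neg_gradient_norm_lt_general
    {E : Type*} [NormedAddCommGroup E] [InnerProductSpace ℝ E] [CompleteSpace E]
    (a : E) (ha : a ≠ 0) (τ : ℝ) (hτ : 0 < τ) (n : ℕ)
    (z : Fin n → E) (t₁ t₂ : Fin n)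
    (hsim : ⟪a, z t₁⟫ > ⟪a, z t₂⟫) :
    ‖gradient
        (fun v : E => Real.log (Real.exp (⟪a, v⟫ / τ) +
          ∑ j ∈ Finset.univ.erase t₁, Real.exp (⟪a, z j⟫ / τ))) (z t₁)‖ >
    ‖gradient
        (fun v : E => Real.log (Real.exp (⟪a, v⟫ / τ) +
          ∑ j ∈ Finset.univ.erase t₂, Real.exp (⟪a, z j⟫ / τ))) (z t₂)‖ := by
  have hS : 0 < ∑ j, exp (⟪a, z j⟫ / τ) := sum_pos (fun j _ => exp_pos _) ⟨t₁, mem_univ _⟩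
  rw [gradient_log_exp_inner_add_sum_erase, gradient_log_exp_inner_add_sum_erase,
    norm_smul, norm_smul, Real.norm_of_nonneg (by positivity),
    Real.norm_of_nonneg (by positivity)]
  gcongr

/-- Theorem 1, part 1: if a negative sample `z t₁` is more similar (in dot
product) to the anchor `a` than `z t₂`, then the gradient of the InfoNCE
log-partition term with respect to `z t₁` is strictly larger in norm than the
gradient with respect to `z t₂`. -/
theorem infoNCE_neg_gradient_norm_lt
    {E : Type*} [NormedAddCommGroup E] [InnerProductSpace ℝ E] [CompleteSpace E]
    (a : E) (ha : a ≠ 0) (τ : ℝ) (hτ : 0 < τ) (n : ℕ) (hn : 1 ≤ n)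
    (z : Fin n → E) (t₁ t₂ : Fin n)
    (hsim : ⟪a, z t₁⟫ > ⟪a, z t₂⟫) :
    ‖gradient
        (fun v : E => Real.log (Real.exp (⟪a, v⟫ / τ) +
          ∑ j ∈ Finset.univ.erase t₁, Real.exp (⟪a, z j⟫ / τ))) (z t₁)‖ >
    ‖gradient
        (fun v : E => Real.log (Real.exp (⟪a, v⟫ / τ) +
          ∑ j ∈ Finset.univ.erase t₂, Real.exp (⟪a, z j⟫ / τ))) (z t₂)‖ :=
  infoNCE_neg_gradient_norm_lt_general a ha τ hτ n z t₁ t₂ hsim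
end

section
/- (Theorem 1, part 2.) Let E be a real inner product space, let a ∈ E be the anchor embedding, let τ > 0, let n ≥ 1 and let z : Fin n → E be the negative-sample embeddings. For an index t, let F_t : E → ℝ be F_t(v) = log( exp(⟪a, v⟫/τ) + ∑_{j ≠ t} exp(⟪a, z j⟫/τ) ), the InfoNCE log-partition term as a function of the t-th negative embedding with the others fixed, and let G : E → ℝ be G(v) = -⟪a, v⟫/τ, the loss as a function of the positive embedding. Then for every t the gradient with respect to the positive sample is at least as large in norm as the gradient with respect to any negative sample: ‖gradient G p‖ ≥ ‖gradient F_t (z t)‖ (for any p ∈ E). -/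
/-!
Both functions depend on `v` only through `⟪a, v⟫`, so by the chain rule each gradient is a
multiple of `a`: the factor is `-1/τ` for the positive term and `σ/τ` for the negative one, where
`σ = exp s / (exp s + C)` with `C ≥ 0` the mass of the remaining negatives is a softmax
probability and hence at most `1`.
-/

open Real Finset RealInnerProductSpace

section Gradient

variable {E : Type*} [NormedAddCommGroup E] [InnerProductSpace ℝ E] [CompleteSpace E]

theorem hasGradientAt_inner_right (a x : E) : HasGradientAt (fun v => ⟪a, v⟫) a x := by
  rw [hasGradientAt_iff_hasFDerivAt]
  exact (innerSL ℝ a).hasFDerivAt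

theorem HasDerivAt.comp_hasGradientAt {h : ℝ → ℝ} {h' : ℝ} {f : E → ℝ} {g x : E}
    (hh : HasDerivAt h h' (f x)) (hf : HasGradientAt f g x) :
    HasGradientAt (fun v => h (f v)) (h' • g) x := by
  rw [hasGradientAt_iff_hasFDerivAt] at hf ⊢
  rw [map_smulₛₗ, conj_trivial]
  exact hh.comp_hasFDerivAt x hf

end Gradient

theorem hasDerivAt_log_exp_add_const {C : ℝ} (hC : 0 ≤ C) (s : ℝ) :
    HasDerivAt (fun s => log (exp s + C)) (exp s / (exp s + C)) s := by
  simpa using ((hasDerivAt_exp s).add_const C).log (by positivity)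

theorem exp_div_exp_add_le_one {C : ℝ} (hC : 0 ≤ C) (s : ℝ) : exp s / (exp s + C) ≤ 1 :=
  div_le_one_of_le₀ (by linarith) (by positivity)

theorem infoNCE_pos_gradient_norm_ge_neg_general
    {E : Type*} [NormedAddCommGroup E] [InnerProductSpace ℝ E] [CompleteSpace E]
    (a : E) (τ : ℝ) (n : ℕ) (z : Fin n → E) :
    ∀ (t : Fin n) (p : E),
      ‖gradient (fun v : E => -⟪a, v⟫ / τ) p‖ ≥
      ‖gradient
          (fun v : E => Real.log (Real.exp (⟪a, v⟫ / τ) +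
            ∑ j ∈ Finset.univ.erase t, Real.exp (⟪a, z j⟫ / τ))) (z t)‖ := by
  intro t p
  set C := ∑ j ∈ univ.erase t, exp (⟪a, z j⟫ / τ)
  have hC : 0 ≤ C := sum_nonneg fun j _ => (exp_pos _).le
  set s := ⟪a, z t⟫ / τ
  have hG : HasGradientAt (fun v : E => -⟪a, v⟫ / τ) ((-1 / τ) • a) p :=
    (hasDerivAt_neg' _ |>.div_const τ).comp_hasGradientAt (hasGradientAt_inner_right a p)
  have hF_scalar : HasDerivAt (fun u => log (exp (u / τ) + C))
      (exp s / (exp s + C) * (1 / τ)) ⟪a, z t⟫ :=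
    (hasDerivAt_log_exp_add_const hC s).comp (h := fun u => u / τ) _
      ((hasDerivAt_id _).div_const τ)
  have hF : HasGradientAt (fun v : E => log (exp (⟪a, v⟫ / τ) + C))
      ((exp s / (exp s + C) * (1 / τ)) • a) (z t) :=
    hF_scalar.comp_hasGradientAt (hasGradientAt_inner_right a (z t))
  rw [hG.gradient, hF.gradient, norm_smul, norm_smul, norm_mul, neg_div, norm_neg,
    norm_of_nonneg (by positivity : 0 ≤ exp s / (exp s + C))]
  gcongr
  exact mul_le_of_le_one_left (norm_nonneg _) (exp_div_exp_add_le_one hC s)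

/-- Theorem 1, part 2: the norm of the gradient of the InfoNCE loss with respect
to the positive sample is at least the norm of the gradient with respect to any
negative sample. -/
theorem infoNCE_pos_gradient_norm_ge_neg
    {E : Type*} [NormedAddCommGroup E] [InnerProductSpace ℝ E] [CompleteSpace E]
    (a : E) (τ : ℝ) (hτ : 0 < τ) (n : ℕ) (hn : 1 ≤ n) (z : Fin n → E) :
    ∀ (t : Fin n) (p : E),
      ‖gradient (fun v : E => -⟪a, v⟫ / τ) p‖ ≥
      ‖gradient
          (fun v : E => Real.log (Real.exp (⟪a, v⟫ / τ) +
            ∑ j ∈ Finset.univ.erase t, Real.exp (⟪a, z j⟫ / τ))) (z t)‖ :=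
  infoNCE_pos_gradient_norm_ge_neg_general a τ n z
end
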